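/- (Lemma 1, variance) Let M ≥ 2, let π be a uniformly random permutation of {0, 1, …, M−1}, and for p, q ∈ ℝ with p, q ∉ ℤ define η(p,q) = (1/M)·∑_{m=0}^{M−1} exp(i·2π·(m·p − π(m)·q)). Then the variance Var[η(p,q)] := E[|η(p,q)|²] − |E[η(p,q)]|² equals (M/(M−1))·(Sa_M(p)² − 1/M)·(Sa_M(q)² − 1/M) − Sa_M(p)²·Sa_M(q)² + 1/M, where Sa_M(x) = sin(π·M·x)/(M·sin(π·x)). -/

import Mathlib

/-- `Sa_M(x) = sin(πMx)/(M sin(πx))`. -/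
noncomputable def Sa (M : ℕ) (x : ℝ) : ℝ :=
  Real.sin (Real.pi * (M : ℝ) * x) / ((M : ℝ) * Real.sin (Real.pi * x))

/-- The random beam correlation of the random-permutation FDA:
`η(p,q) = (1/M)·∑_{m<M} exp(i·2π·(m·p − σ(m)·q))`. -/
noncomputable def eta (M : ℕ) (σ : Equiv.Perm (Fin M)) (p q : ℝ) : ℂ :=
  (M : ℂ)⁻¹ * ∑ m : Fin M,
    Complex.exp (Complex.I * ((2 * Real.pi * (((m : ℕ) : ℝ) * p - ((σ m : ℕ) : ℝ) * q) : ℝ) : ℂ))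

/-!
Write `η(σ) = M⁻¹ ∑ₘ aₘ b_{σ(m)}` with unimodular `aₘ = e^{2πimp}`, `bₙ = e^{-2πinq}`. Averaged over
`σ`, `b_{σ(m)}` is the mean of `b`, and for `m ≠ m'` the pair `(σ(m), σ(m'))` is uniform on the
off-diagonal, so `E η` and `E |η|²` depend only on `|∑ a|²` and `|∑ b|²`. These are Dirichlet
kernels, `|∑_{m<M} e^{2πimx}| = |sin(πMx) / sin(πx)| = M |Sa_M(x)|`, by the geometric sum.
-/

open Finset
open scoped Nat

theorem Finset.sum_sum_erase_mul {ι R : Type*} [Fintype ι] [DecidableEq ι] [CommRing R]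
    (f g : ι → R) :
    ∑ i, ∑ j ∈ univ.erase i, f i * g j = (∑ i, f i) * (∑ j, g j) - ∑ i, f i * g i := by
  simp only [← mul_sum, sum_erase_eq_sub (mem_univ _), sum_sub_distrib, sum_mul]

namespace Equiv.Perm

variable {ι : Type*} [Fintype ι] [DecidableEq ι]

theorem sum_apply_eq_sum_apply {β : Type*} [AddCommMonoid β] (f : ι → β) (i i' : ι) :
    ∑ σ : Perm ι, f (σ i) = ∑ σ : Perm ι, f (σ i') :=
  Fintype.sum_equiv (Equiv.mulRight (swap i i')) _ _ fun σ => by simp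

theorem sum_apply_apply_eq_sum_apply_apply {β : Type*} [AddCommMonoid β] (F : ι → ι → β)
    {i i₁ i₂ : ι} (h₁ : i₁ ≠ i) (h₂ : i₂ ≠ i) :
    ∑ σ : Perm ι, F (σ i) (σ i₁) = ∑ σ : Perm ι, F (σ i) (σ i₂) :=
  Fintype.sum_equiv (Equiv.mulRight (swap i₁ i₂)) _ _ fun σ => by
    simp [swap_apply_of_ne_of_ne h₁.symm h₂.symm]

variable {K : Type*} [Field K] [CharZero K]

theorem sum_apply_eq_mul_sum (f : ι → K) (i : ι) :
    ∑ σ : Perm ι, f (σ i) = ((Fintype.card ι)! / Fintype.card ι : K) * ∑ j, f j := by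
  have hn : (Fintype.card ι : K) ≠ 0 := Nat.cast_ne_zero.mpr (Fintype.card_pos_iff.mpr ⟨i⟩).ne'
  rw [div_mul_eq_mul_div, eq_div_iff hn]
  calc (∑ σ : Perm ι, f (σ i)) * Fintype.card ι
      = ∑ i' : ι, ∑ σ : Perm ι, f (σ i') := by
        simp [sum_apply_eq_sum_apply f _ i, mul_comm]
    _ = ∑ σ : Perm ι, ∑ j, f j := by
        rw [sum_comm]; exact sum_congr rfl fun σ _ => Equiv.sum_comp σ f
    _ = (Fintype.card ι)! * ∑ j, f j := by simp [Fintype.card_perm]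

theorem sum_apply_apply_eq_mul_sum_of_ne (F : ι → ι → K) {i i' : ι} (h : i' ≠ i) :
    ∑ σ : Perm ι, F (σ i) (σ i') =
      ((Fintype.card ι)! / (Fintype.card ι * (Fintype.card ι - 1)) : K) *
        ∑ j, ∑ j' ∈ univ.erase j, F j j' := by
  set n := Fintype.card ι
  have h1 : 1 < n := Fintype.one_lt_card_iff.mpr ⟨i', i, h⟩
  have hn : (n - 1 : K) ≠ 0 := by rw [sub_ne_zero]; exact_mod_cast h1.ne'
  rw [div_mul_eq_div_div, div_mul_eq_mul_div, eq_div_iff hn]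
  -- Summing over all `n - 1` choices of `i'` reduces to the one-point average of the row sums.
  calc (∑ σ : Perm ι, F (σ i) (σ i')) * (n - 1)
      = ∑ i'' ∈ univ.erase i, ∑ σ : Perm ι, F (σ i) (σ i'') := by
        rw [sum_congr rfl fun i'' hi'' =>
          sum_apply_apply_eq_sum_apply_apply F (ne_of_mem_erase hi'') h]
        simp [card_erase_of_mem, n, mul_comm, Nat.cast_sub h1.le]
    _ = ∑ σ : Perm ι, ∑ j' ∈ univ.erase (σ i), F (σ i) j' := by
        rw [sum_comm]
        refine sum_congr rfl fun σ _ => ?_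
        rw [sum_erase_eq_sub (mem_univ _), sum_erase_eq_sub (mem_univ _),
          Equiv.sum_comp σ (F (σ i))]
    _ = n ! / n * ∑ j, ∑ j' ∈ univ.erase j, F j j' :=
        sum_apply_eq_mul_sum (fun j => ∑ j' ∈ univ.erase j, F j j') i

theorem sum_sum_sum_mul_apply_apply (F G : ι → ι → K) :
    ∑ σ : Perm ι, ∑ m, ∑ m', F m m' * G (σ m) (σ m') =
      ((Fintype.card ι)! / Fintype.card ι : K) * (∑ m, F m m) * ∑ j, G j j +
        ((Fintype.card ι)! / (Fintype.card ι * (Fintype.card ι - 1)) : K) *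
          (∑ m, ∑ m' ∈ univ.erase m, F m m') * ∑ j, ∑ j' ∈ univ.erase j, G j j' := by
  calc ∑ σ : Perm ι, ∑ m, ∑ m', F m m' * G (σ m) (σ m')
      = ∑ m, (F m m * ∑ σ : Perm ι, G (σ m) (σ m) +
          ∑ m' ∈ univ.erase m, F m m' * ∑ σ : Perm ι, G (σ m) (σ m')) := by
        simp only [mul_sum]
        rw [sum_comm]
        refine sum_congr rfl fun m _ => ?_
        rw [sum_comm, ← add_sum_erase _ _ (mem_univ m)]
    _ = ∑ m, (F m m * (((Fintype.card ι)! / Fintype.card ι : K) * ∑ j, G j j) +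
          ∑ m' ∈ univ.erase m, F m m' *
            (((Fintype.card ι)! / (Fintype.card ι * (Fintype.card ι - 1)) : K) *
              ∑ j, ∑ j' ∈ univ.erase j, G j j')) := by
        refine sum_congr rfl fun m _ => ?_
        rw [sum_apply_eq_mul_sum (fun j => G j j) m]
        congr 1
        exact sum_congr rfl fun m' hm' => by
          rw [sum_apply_apply_eq_mul_sum_of_ne G (ne_of_mem_erase hm')]
    _ = _ := by simp only [sum_add_distrib, ← sum_mul]; ring

theorem sum_sum_mul_apply (a b : ι → K) :
    ∑ σ : Perm ι, ∑ m, a m * b (σ m) =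
      ((Fintype.card ι)! / Fintype.card ι : K) * (∑ m, a m) * ∑ j, b j := by
  rw [sum_comm]
  simp only [← mul_sum, sum_apply_eq_mul_sum b]
  rw [← sum_mul]
  ring

open ComplexConjugate in
theorem sum_norm_sum_mul_apply_sq (a b : ι → ℂ) :
    ∑ σ : Perm ι, ‖∑ m, a m * b (σ m)‖ ^ 2 =
      ((Fintype.card ι)! / Fintype.card ι : ℝ) * (∑ m, ‖a m‖ ^ 2) * (∑ j, ‖b j‖ ^ 2) +
        ((Fintype.card ι)! / (Fintype.card ι * (Fintype.card ι - 1)) : ℝ) *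
          (‖∑ m, a m‖ ^ 2 - ∑ m, ‖a m‖ ^ 2) * (‖∑ j, b j‖ ^ 2 - ∑ j, ‖b j‖ ^ 2) := by
  have hexpand : ∀ σ : Perm ι, (∑ m, a m * b (σ m)) * conj (∑ m, a m * b (σ m)) =
      ∑ m, ∑ m', a m * conj (a m') * (b (σ m) * conj (b (σ m'))) := fun σ => by
    rw [map_sum, sum_mul_sum]
    simp only [map_mul]
    exact sum_congr rfl fun m _ => sum_congr rfl fun m' _ => by ring
  apply Complex.ofReal_injective
  push_cast
  simp only [← Complex.mul_conj']
  rw [sum_congr rfl fun σ _ => hexpand σ,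
    sum_sum_sum_mul_apply_apply (fun m m' => a m * conj (a m')) (fun j j' => b j * conj (b j')),
    sum_sum_erase_mul, sum_sum_erase_mul, map_sum, map_sum]

theorem variance_inv_card_mul_sum_mul_apply [Nontrivial ι] (a b : ι → ℂ)
    (ha : ∀ m, ‖a m‖ = 1) (hb : ∀ j, ‖b j‖ = 1) :
    ((Fintype.card ι)! : ℝ)⁻¹ *
        ∑ σ : Perm ι, ‖(Fintype.card ι : ℂ)⁻¹ * ∑ m, a m * b (σ m)‖ ^ 2 -
      ‖((Fintype.card ι)! : ℂ)⁻¹ *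
        ∑ σ : Perm ι, (Fintype.card ι : ℂ)⁻¹ * ∑ m, a m * b (σ m)‖ ^ 2 =
      (Fintype.card ι / (Fintype.card ι - 1) : ℝ) *
          (‖(Fintype.card ι : ℂ)⁻¹ * ∑ m, a m‖ ^ 2 - 1 / Fintype.card ι) *
          (‖(Fintype.card ι : ℂ)⁻¹ * ∑ j, b j‖ ^ 2 - 1 / Fintype.card ι) -
        ‖(Fintype.card ι : ℂ)⁻¹ * ∑ m, a m‖ ^ 2 * ‖(Fintype.card ι : ℂ)⁻¹ * ∑ j, b j‖ ^ 2 +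
        1 / Fintype.card ι := by
  simp only [← mul_sum, norm_mul, mul_pow, sum_sum_mul_apply, sum_norm_sum_mul_apply_sq, ha, hb,
    norm_inv, norm_div, Complex.norm_natCast, one_pow, sum_const, card_univ, nsmul_eq_mul, mul_one]
  have hn : 1 < Fintype.card ι := Fintype.one_lt_card
  generalize Fintype.card ι = n at hn ⊢
  have hn1 : (n : ℝ) - 1 ≠ 0 := by rw [sub_ne_zero]; exact_mod_cast hn.ne'
  have hn0 : (n : ℝ) ≠ 0 := by positivity
  field_simp
  ring

end Equiv.Perm

open Real

theorem Real.sin_pi_mul_ne_zero_of_forall_ne_intCast {x : ℝ} (hx : ∀ k : ℤ, x ≠ k) :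
    sin (π * x) ≠ 0 := by
  rw [Ne, sin_eq_zero_iff]
  rintro ⟨k, hk⟩
  exact hx k (mul_left_cancel₀ pi_ne_zero (by linarith))

theorem norm_sum_range_exp_I_mul {x : ℝ} (hx : sin (π * x) ≠ 0) (M : ℕ) :
    ‖∑ m ∈ range M, Complex.exp (Complex.I * ↑(2 * π * (m * x)))‖ =
      |sin (π * M * x) / sin (π * x)| := by
  set w := Complex.exp (Complex.I * ↑(2 * π * x))
  have hpow (k : ℕ) : Complex.exp (Complex.I * ↑(2 * π * (k * x))) = w ^ k := by
    rw [← Complex.exp_nat_mul]; push_cast; ring_nf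
  have hnorm (k : ℕ) : ‖w ^ k - 1‖ = 2 * |sin (π * k * x)| := by
    rw [← hpow, Complex.norm_exp_I_mul_ofReal_sub_one, norm_mul, norm_two, Real.norm_eq_abs]
    ring_nf
  have h1 := hnorm 1
  rw [pow_one, Nat.cast_one, mul_one] at h1
  have hw : w ≠ 1 := fun h => by
    rw [h, sub_self, norm_zero] at h1
    exact hx (abs_eq_zero.mp (by linarith))
  simp only [hpow, geom_sum_eq hw, norm_div, hnorm, h1, abs_div]
  field_simp

theorem Sa_neg (M : ℕ) (x : ℝ) : Sa M (-x) = Sa M x := by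
  simp only [Sa, mul_neg, sin_neg, neg_div_neg_eq]

theorem norm_inv_mul_sum_exp_I_mul_sq {x : ℝ} (hx : sin (π * x) ≠ 0) (M : ℕ) :
    ‖(M : ℂ)⁻¹ * ∑ m : Fin M, Complex.exp (Complex.I * ↑(2 * π * ((m : ℕ) * x)))‖ ^ 2 =
      Sa M x ^ 2 := by
  rw [Fin.sum_univ_eq_sum_range (fun m : ℕ => Complex.exp (Complex.I * ↑(2 * π * (m * x)))),
    norm_mul, norm_sum_range_exp_I_mul hx, norm_inv, Complex.norm_natCast, mul_pow, sq_abs, Sa]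
  ring

theorem eta_eq (M : ℕ) (σ : Equiv.Perm (Fin M)) (p q : ℝ) :
    eta M σ p q = (M : ℂ)⁻¹ * ∑ m : Fin M,
      Complex.exp (Complex.I * ↑(2 * π * ((m : ℕ) * p))) *
        Complex.exp (Complex.I * ↑(2 * π * ((σ m : ℕ) * -q))) := by
  refine congrArg _ (sum_congr rfl fun m _ => ?_)
  rw [← Complex.exp_add]
  push_cast
  ring_nf

/-- (Lemma 1, variance) For a uniformly random permutation of `{0,…,M−1}`
(`M ≥ 2`) and non-integer `p, q`, the variance
`Var[η(p,q)] = E[|η|²] − |E[η]|²` equals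
`(M/(M−1))·(Sa_M(p)² − 1/M)·(Sa_M(q)² − 1/M) − Sa_M(p)²·Sa_M(q)² + 1/M`. -/
theorem stmt_6 (M : ℕ) (hM : 2 ≤ M) (p q : ℝ)
    (hp : ∀ k : ℤ, p ≠ (k : ℝ)) (hq : ∀ k : ℤ, q ≠ (k : ℝ)) :
    (Nat.factorial M : ℝ)⁻¹ * (∑ σ : Equiv.Perm (Fin M), ‖eta M σ p q‖ ^ 2) -
        ‖(Nat.factorial M : ℂ)⁻¹ * ∑ σ : Equiv.Perm (Fin M), eta M σ p q‖ ^ 2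
      = ((M : ℝ) / ((M : ℝ) - 1)) * (Sa M p ^ 2 - 1 / (M : ℝ)) * (Sa M q ^ 2 - 1 / (M : ℝ))
          - Sa M p ^ 2 * Sa M q ^ 2 + 1 / (M : ℝ) := by
  have : Nontrivial (Fin M) := Fin.nontrivial_iff_two_le.mpr hM
  have hvar := Equiv.Perm.variance_inv_card_mul_sum_mul_apply
    (fun m : Fin M => Complex.exp (Complex.I * ↑(2 * π * ((m : ℕ) * p))))
    (fun m : Fin M => Complex.exp (Complex.I * ↑(2 * π * ((m : ℕ) * -q))))
    (fun _ => Complex.norm_exp_I_mul_ofReal _) (fun _ => Complex.norm_exp_I_mul_ofReal _)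
  have hq' : sin (π * -q) ≠ 0 := by
    rw [mul_neg, sin_neg, neg_ne_zero]; exact sin_pi_mul_ne_zero_of_forall_ne_intCast hq
  simp only [Fintype.card_fin,
    norm_inv_mul_sum_exp_I_mul_sq (sin_pi_mul_ne_zero_of_forall_ne_intCast hp),
    norm_inv_mul_sum_exp_I_mul_sq hq', Sa_neg] at hvar
  simpa only [eta_eq] using hvar
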